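/- arXiv:2407.07498 — 8 statements merged into one kernel-verified Lean document; each statement's English description precedes it below -/
import Mathlib

section
/- Let A be an invertible n×n real matrix, B an m×n real matrix, C an m×m real matrix, and suppose S = B A⁻¹ Bᵀ + C is invertible. With K = [[A, Bᵀ],[B, −C]] and P = [[A, Bᵀ],[0, −S]], the matrix K P⁻¹ − I is nilpotent of order 2, i.e. (K P⁻¹ − I)² = 0. (This is why GMRES applied to the ideally preconditioned system converges in 2 iterations.) -/
open Matrix

/-- With `K = [[A, Bᵀ],[B, −C]]`, `S = B A⁻¹ Bᵀ + C` invertible and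
`P = [[A, Bᵀ],[0, −S]]`, the matrix `K P⁻¹ − I` is nilpotent of order 2:
`(K P⁻¹ − I)² = 0`. -/
theorem stmt_1 (n m : ℕ)
    (A : Matrix (Fin n) (Fin n) ℝ) (B : Matrix (Fin m) (Fin n) ℝ)
    (C : Matrix (Fin m) (Fin m) ℝ)
    (hA : IsUnit A)
    (hS : IsUnit (B * A⁻¹ * Bᵀ + C)) :
    ((Matrix.fromBlocks A Bᵀ B (-C)) *
        (Matrix.fromBlocks A Bᵀ 0 (-(B * A⁻¹ * Bᵀ + C)))⁻¹ - 1) ^ 2 = 0 := by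
  set S := B * A⁻¹ * Bᵀ + C with hSdef
  have hAd : IsUnit A.det := (Matrix.isUnit_iff_isUnit_det A).mp hA
  have hSd : IsUnit S.det := (Matrix.isUnit_iff_isUnit_det S).mp hS
  have hA1 : A * A⁻¹ = 1 := A.mul_nonsing_inv hAd
  have hS1 : S * S⁻¹ = 1 := S.mul_nonsing_inv hSd
  have hPinv : (Matrix.fromBlocks A Bᵀ 0 (-S))⁻¹ =
      Matrix.fromBlocks A⁻¹ (A⁻¹ * Bᵀ * S⁻¹) 0 (-S⁻¹) := by
    apply Matrix.inv_eq_right_inv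
    rw [Matrix.fromBlocks_multiply]
    have h12 : A * (A⁻¹ * Bᵀ * S⁻¹) + Bᵀ * -S⁻¹ = 0 := by
      rw [← Matrix.mul_assoc, ← Matrix.mul_assoc, hA1, Matrix.one_mul]
      simp [Matrix.mul_neg]
    simp only [hA1, Matrix.mul_zero, add_zero, Matrix.zero_mul,
      zero_add, h12, neg_mul_neg, hS1]
    exact Matrix.fromBlocks_one
  rw [hPinv, Matrix.fromBlocks_multiply]
  have h11 : A * A⁻¹ + Bᵀ * (0 : Matrix (Fin m) (Fin n) ℝ) = 1 := by
    rw [Matrix.mul_zero, add_zero, hA1]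
  have h12 : A * (A⁻¹ * Bᵀ * S⁻¹) + Bᵀ * -S⁻¹ = 0 := by
    rw [← Matrix.mul_assoc, ← Matrix.mul_assoc, hA1, Matrix.one_mul]
    simp [Matrix.mul_neg]
  have h22 : B * (A⁻¹ * Bᵀ * S⁻¹) + -C * -S⁻¹ = 1 := by
    rw [neg_mul_neg, ← Matrix.mul_assoc, ← Matrix.mul_assoc,
      ← Matrix.add_mul, hSdef]
    exact hS1
  rw [h11, h12, h22]
  simp only [Matrix.mul_zero, add_zero]
  have hsub : Matrix.fromBlocks (1 : Matrix (Fin n) (Fin n) ℝ) 0 (B * A⁻¹)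
      (1 : Matrix (Fin m) (Fin m) ℝ) - 1 = Matrix.fromBlocks 0 0 (B * A⁻¹) 0 := by
    rw [← Matrix.fromBlocks_one, sub_eq_add_neg, Matrix.fromBlocks_neg,
      Matrix.fromBlocks_add]
    simp
  rw [hsub, pow_two, Matrix.fromBlocks_multiply]
  simp
end

section
/- Let A be an invertible n×n real matrix, B an m×n real matrix, C an m×m real matrix, suppose S = B A⁻¹ Bᵀ + C is invertible, and let Ŝ be an m×m real matrix. Then K = [[A, Bᵀ],[B, −C]] is invertible and, with P̂ = [[A, Bᵀ],[0, −Ŝ]], one has P̂ K⁻¹ = [[I, 0],[−Ŝ S⁻¹ B A⁻¹, Ŝ S⁻¹]]. -/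
open Matrix

/-- With `K = [[A, Bᵀ],[B, −C]]`, `S = B A⁻¹ Bᵀ + C` invertible, `Ŝ`
an arbitrary m×m matrix and `P̂ = [[A, Bᵀ],[0, −Ŝ]]`, the matrix `K` is
invertible and `P̂ K⁻¹ = [[I, 0],[−Ŝ S⁻¹ B A⁻¹, Ŝ S⁻¹]]`. -/
theorem stmt_5 (n m : ℕ)
    (A : Matrix (Fin n) (Fin n) ℝ) (B : Matrix (Fin m) (Fin n) ℝ)
    (C : Matrix (Fin m) (Fin m) ℝ) (Shat : Matrix (Fin m) (Fin m) ℝ)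
    (hA : IsUnit A)
    (hS : IsUnit (B * A⁻¹ * Bᵀ + C)) :
    IsUnit (Matrix.fromBlocks A Bᵀ B (-C)) ∧
      (Matrix.fromBlocks A Bᵀ 0 (-Shat)) * (Matrix.fromBlocks A Bᵀ B (-C))⁻¹ =
        Matrix.fromBlocks 1 0
          (-(Shat * (B * A⁻¹ * Bᵀ + C)⁻¹ * B * A⁻¹))
          (Shat * (B * A⁻¹ * Bᵀ + C)⁻¹) := by
  letI iA : Invertible A := hA.invertible
  letI iS : Invertible (B * A⁻¹ * Bᵀ + C) := hS.invertible
  have hinvA : ⅟A = A⁻¹ := invOf_eq_nonsing_inv A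
  have hSchur : (-C : Matrix (Fin m) (Fin m) ℝ) - B * ⅟A * Bᵀ
      = -(B * A⁻¹ * Bᵀ + C) := by
    rw [hinvA]; abel
  letI iNS : Invertible ((-C : Matrix (Fin m) (Fin m) ℝ) - B * ⅟A * Bᵀ) := by
    rw [hSchur]; exact invertibleNeg _
  letI iK : Invertible (fromBlocks A Bᵀ B (-C)) := fromBlocks₁₁Invertible A Bᵀ B (-C)
  refine ⟨isUnit_of_invertible _, ?_⟩
  have hKinv : (fromBlocks A Bᵀ B (-C))⁻¹ = ⅟(fromBlocks A Bᵀ B (-C)) :=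
    (invOf_eq_nonsing_inv _).symm
  letI iNS' : Invertible (-(B * A⁻¹ * Bᵀ + C)) := invertibleNeg _
  have hinvNS : ⅟((-C : Matrix (Fin m) (Fin m) ℝ) - B * ⅟A * Bᵀ)
      = -((B * A⁻¹ * Bᵀ + C)⁻¹) := by
    apply invOf_eq_right_inv
    rw [hSchur, neg_mul_neg]
    exact mul_nonsing_inv _ ((isUnit_iff_isUnit_det _).mp hS)
  rw [hKinv, invOf_fromBlocks₁₁_eq, hinvNS, hinvA, fromBlocks_multiply]
  have hAA : A * A⁻¹ = 1 := by rw [← hinvA]; exact mul_invOf_self A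
  rw [fromBlocks_inj]
  refine ⟨?_, ?_, ?_, ?_⟩
  all_goals
    simp [Matrix.mul_add, Matrix.mul_neg, Matrix.neg_mul, neg_neg,
      ← Matrix.mul_assoc, hAA]
end

section
/- Let W be an N×N real symmetric positive definite matrix and define, for an N×N real matrix X, μ(X) = inf over nonzero z ∈ ℝᴺ of ⟨W X z, z⟩ / ⟨W z, z⟩. If 𝔅 is an invertible N×N real matrix with μ(𝔅) > 0, then μ(𝔅) · μ(𝔅⁻¹) ≤ 1. -/
open Matrix

/-- The `W`-weighted field-of-values quantity
`μ(X) = inf_{z ≠ 0} ⟨W X z, z⟩ / ⟨W z, z⟩`. -/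
noncomputable def fovMu {N : ℕ} (W X : Matrix (Fin N) (Fin N) ℝ) : ℝ :=
  ⨅ z : {z : Fin N → ℝ // z ≠ 0},
    ((W *ᵥ (X *ᵥ (z : Fin N → ℝ))) ⬝ᵥ (z : Fin N → ℝ)) /
      ((W *ᵥ (z : Fin N → ℝ)) ⬝ᵥ (z : Fin N → ℝ))

lemma symmW {N : ℕ} {W : Matrix (Fin N) (Fin N) ℝ} (hW : W.PosDef)
    (z w : Fin N → ℝ) : (W *ᵥ z) ⬝ᵥ w = (W *ᵥ w) ⬝ᵥ z := by
  have hT : Wᵀ = W := by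
    have := hW.isHermitian; rwa [Matrix.IsHermitian, conjTranspose_eq_transpose_of_trivial] at this
  rw [dotProduct_comm (W *ᵥ z) w, dotProduct_mulVec, ← mulVec_transpose, hT,
    dotProduct_comm]

lemma posW {N : ℕ} {W : Matrix (Fin N) (Fin N) ℝ} (hW : W.PosDef)
    {z : Fin N → ℝ} (hz : z ≠ 0) : 0 < (W *ᵥ z) ⬝ᵥ z := by
  have := hW.dotProduct_mulVec_pos hz
  simpa [dotProduct_comm] using this

lemma csW {N : ℕ} {W : Matrix (Fin N) (Fin N) ℝ} (hW : W.PosDef)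
    (z w : Fin N → ℝ) :
    ((W *ᵥ z) ⬝ᵥ w) ^ 2 ≤ ((W *ᵥ z) ⬝ᵥ z) * ((W *ᵥ w) ⬝ᵥ w) := by
  have key : ∀ t : ℝ, 0 ≤ ((W *ᵥ w) ⬝ᵥ w) * (t * t) + (2 * ((W *ᵥ z) ⬝ᵥ w)) * t
      + ((W *ᵥ z) ⬝ᵥ z) := by
    intro t
    have h0 : 0 ≤ (W *ᵥ (z + t • w)) ⬝ᵥ (z + t • w) := by
      by_cases h : z + t • w = 0
      · simp [h]
      · exact (posW hW h).le
    have hsym := symmW hW z w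
    simp only [mulVec_add, mulVec_smul, add_dotProduct, dotProduct_add,
      smul_dotProduct, dotProduct_smul, smul_eq_mul] at h0
    rw [hsym] at h0 ⊢
    nlinarith [h0]
  have hd := discrim_le_zero key
  rw [discrim] at hd
  nlinarith [hd]

/-- If `W` is symmetric positive definite and `𝔅` is invertible with
`μ(𝔅) > 0`, then `μ(𝔅) · μ(𝔅⁻¹) ≤ 1`. -/
theorem stmt_6 (N : ℕ) (W 𝔅 : Matrix (Fin N) (Fin N) ℝ)
    (hW : W.PosDef) (h𝔅 : IsUnit 𝔅) (hμ : 0 < fovMu W 𝔅) :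
    fovMu W 𝔅 * fovMu W 𝔅⁻¹ ≤ 1 := by
  rcases le_or_gt (fovMu W 𝔅⁻¹) 0 with h | h
  · calc fovMu W 𝔅 * fovMu W 𝔅⁻¹ ≤ 0 := mul_nonpos_of_nonneg_of_nonpos hμ.le h
      _ ≤ 1 := zero_le_one
  have hne : Nonempty {z : Fin N → ℝ // z ≠ 0} := by
    by_contra hh
    rw [not_nonempty_iff] at hh
    have : fovMu W 𝔅 = 0 := Real.iInf_of_isEmpty _
    linarith
  have hB1 : BddBelow (Set.range fun z : {z : Fin N → ℝ // z ≠ 0} =>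
      ((W *ᵥ (𝔅 *ᵥ (z : Fin N → ℝ))) ⬝ᵥ (z : Fin N → ℝ)) /
        ((W *ᵥ (z : Fin N → ℝ)) ⬝ᵥ (z : Fin N → ℝ))) := by
    by_contra hh
    have : fovMu W 𝔅 = 0 := Real.iInf_of_not_bddBelow hh
    linarith
  have hB2 : BddBelow (Set.range fun z : {z : Fin N → ℝ // z ≠ 0} =>
      ((W *ᵥ (𝔅⁻¹ *ᵥ (z : Fin N → ℝ))) ⬝ᵥ (z : Fin N → ℝ)) /
        ((W *ᵥ (z : Fin N → ℝ)) ⬝ᵥ (z : Fin N → ℝ))) := by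
    by_contra hh
    have : fovMu W 𝔅⁻¹ = 0 := Real.iInf_of_not_bddBelow hh
    linarith
  obtain ⟨z, hz⟩ := hne.some
  have hdet : IsUnit 𝔅.det := (Matrix.isUnit_iff_isUnit_det 𝔅).mp h𝔅
  have hinvw : 𝔅⁻¹ *ᵥ (𝔅 *ᵥ z) = z := by
    rw [mulVec_mulVec, Matrix.nonsing_inv_mul _ hdet, one_mulVec]
  have hw : 𝔅 *ᵥ z ≠ 0 := by
    intro h0
    apply hz
    rw [← hinvw, h0, mulVec_zero]
  have hp : 0 < (W *ᵥ z) ⬝ᵥ z := posW hW hz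
  have hq : 0 < (W *ᵥ (𝔅 *ᵥ z)) ⬝ᵥ (𝔅 *ᵥ z) := posW hW hw
  have h1 : fovMu W 𝔅 ≤ ((W *ᵥ (𝔅 *ᵥ z)) ⬝ᵥ z) / ((W *ᵥ z) ⬝ᵥ z) :=
    ciInf_le hB1 ⟨z, hz⟩
  have h2 : fovMu W 𝔅⁻¹ ≤ ((W *ᵥ (𝔅⁻¹ *ᵥ (𝔅 *ᵥ z))) ⬝ᵥ (𝔅 *ᵥ z)) /
      ((W *ᵥ (𝔅 *ᵥ z)) ⬝ᵥ (𝔅 *ᵥ z)) := ciInf_le hB2 ⟨𝔅 *ᵥ z, hw⟩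
  rw [hinvw, symmW hW z (𝔅 *ᵥ z)] at h2
  have hcs : ((W *ᵥ (𝔅 *ᵥ z)) ⬝ᵥ z) ^ 2 ≤
      ((W *ᵥ (𝔅 *ᵥ z)) ⬝ᵥ (𝔅 *ᵥ z)) * ((W *ᵥ z) ⬝ᵥ z) := csW hW (𝔅 *ᵥ z) z
  have ha : 0 < (W *ᵥ (𝔅 *ᵥ z)) ⬝ᵥ z := by
    have := lt_of_lt_of_le hμ h1
    by_contra hcon
    push_neg at hcon
    have : ((W *ᵥ (𝔅 *ᵥ z)) ⬝ᵥ z) / ((W *ᵥ z) ⬝ᵥ z) ≤ 0 :=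
      div_nonpos_of_nonpos_of_nonneg hcon hp.le
    linarith
  calc fovMu W 𝔅 * fovMu W 𝔅⁻¹
      ≤ (((W *ᵥ (𝔅 *ᵥ z)) ⬝ᵥ z) / ((W *ᵥ z) ⬝ᵥ z)) *
        (((W *ᵥ (𝔅 *ᵥ z)) ⬝ᵥ z) / ((W *ᵥ (𝔅 *ᵥ z)) ⬝ᵥ (𝔅 *ᵥ z))) := by
        apply mul_le_mul h1 h2 h.le
        positivity
    _ = ((W *ᵥ (𝔅 *ᵥ z)) ⬝ᵥ z) ^ 2 /
        (((W *ᵥ (𝔅 *ᵥ z)) ⬝ᵥ (𝔅 *ᵥ z)) * ((W *ᵥ z) ⬝ᵥ z)) := by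
        field_simp
    _ ≤ 1 := by
        rw [div_le_one (by positivity)]
        exact hcs
end

section
/- Let H11 be an n×n real symmetric positive definite matrix, H22 an m×m real symmetric matrix, and H21 an m×n real matrix. Suppose λ ∈ ℝ, v ∈ ℝⁿ, q ∈ ℝᵐ satisfy the generalized eigenvalue equations H11 v + H21ᵀ q = λ H11 v and H21 v + H22 q = λ H22 q. Then (λ − 1)² ⟨H22 q, q⟩ = ⟨H11⁻¹ H21ᵀ q, H21ᵀ q⟩. -/
open Matrix

/-- If `H11` is symmetric positive definite, `H22` symmetric, and
`(v, q)` solves the generalized eigenvalue equations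
`H11 v + H21ᵀ q = λ H11 v` and `H21 v + H22 q = λ H22 q`, then
`(λ − 1)² ⟨H22 q, q⟩ = ⟨H11⁻¹ H21ᵀ q, H21ᵀ q⟩`. -/
theorem stmt_10 (n m : ℕ)
    (H11 : Matrix (Fin n) (Fin n) ℝ) (H22 : Matrix (Fin m) (Fin m) ℝ)
    (H21 : Matrix (Fin m) (Fin n) ℝ)
    (hH11 : H11.PosDef) (hH22 : H22.IsSymm)
    (lam : ℝ) (v : Fin n → ℝ) (q : Fin m → ℝ)
    (h1 : H11 *ᵥ v + H21ᵀ *ᵥ q = lam • (H11 *ᵥ v))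
    (h2 : H21 *ᵥ v + H22 *ᵥ q = lam • (H22 *ᵥ q)) :
    (lam - 1) ^ 2 * ((H22 *ᵥ q) ⬝ᵥ q) =
      (H11⁻¹ *ᵥ (H21ᵀ *ᵥ q)) ⬝ᵥ (H21ᵀ *ᵥ q) := by
  have key1 : H21ᵀ *ᵥ q = (lam - 1) • (H11 *ᵥ v) := by
    have := h1
    rw [sub_smul, one_smul]
    linear_combination (norm := module) this
  have key2 : H21 *ᵥ v = (lam - 1) • (H22 *ᵥ q) := by
    rw [sub_smul, one_smul]
    linear_combination (norm := module) h2
  have hinv : H11⁻¹ *ᵥ (H21ᵀ *ᵥ q) = (lam - 1) • v := by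
    rw [key1, Matrix.mulVec_smul, Matrix.mulVec_mulVec,
      Matrix.nonsing_inv_mul _ (isUnit_iff_ne_zero.mpr hH11.det_pos.ne'), Matrix.one_mulVec]
  have hvq : (H21 *ᵥ v) ⬝ᵥ q = v ⬝ᵥ (H21ᵀ *ᵥ q) := by
    rw [Matrix.dotProduct_mulVec, Matrix.vecMul_transpose, dotProduct_comm]
  have h3 : (lam - 1) • ((H22 *ᵥ q) ⬝ᵥ q) = (lam - 1) • (v ⬝ᵥ (H11 *ᵥ v)) := by
    calc (lam - 1) • ((H22 *ᵥ q) ⬝ᵥ q) = ((lam - 1) • (H22 *ᵥ q)) ⬝ᵥ q := by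
          rw [smul_dotProduct]
      _ = (H21 *ᵥ v) ⬝ᵥ q := by rw [key2]
      _ = v ⬝ᵥ (H21ᵀ *ᵥ q) := hvq
      _ = v ⬝ᵥ ((lam - 1) • (H11 *ᵥ v)) := by rw [key1]
      _ = (lam - 1) • (v ⬝ᵥ (H11 *ᵥ v)) := by rw [dotProduct_smul]
  rw [hinv, key1, smul_dotProduct, dotProduct_smul]
  simp only [smul_eq_mul] at h3 ⊢
  linear_combination (lam - 1) * h3
end

section
/- Let H11 be an n×n real symmetric positive definite matrix, H22 an m×m real symmetric positive definite matrix, and H21 an m×n real matrix, and assume that ⟨H11⁻¹ H21ᵀ q, H21ᵀ q⟩ ≤ (1/4) ⟨H22 q, q⟩ for all q ∈ ℝᵐ. Then every real generalized eigenvalue λ of the pencil ([[H11, H21ᵀ],[H21, H22]], diag(H11, H22)) — i.e. every λ ∈ ℝ for which there exist (v, q) ≠ (0, 0) with H11 v + H21ᵀ q = λ H11 v and H21 v + H22 q = λ H22 q — satisfies λ ≥ 1/2. -/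
open Matrix

/-- If `H11`, `H22` are symmetric positive definite and
`⟨H11⁻¹ H21ᵀ q, H21ᵀ q⟩ ≤ (1/4) ⟨H22 q, q⟩` for all `q`, then every real
generalized eigenvalue `λ` of the pencil
`([[H11, H21ᵀ],[H21, H22]], diag(H11, H22))` satisfies `λ ≥ 1/2`. -/
theorem stmt_11 (n m : ℕ)
    (H11 : Matrix (Fin n) (Fin n) ℝ) (H22 : Matrix (Fin m) (Fin m) ℝ)
    (H21 : Matrix (Fin m) (Fin n) ℝ)
    (hH11 : H11.PosDef) (hH22 : H22.PosDef)
    (hbound : ∀ q : Fin m → ℝ,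
      (H11⁻¹ *ᵥ (H21ᵀ *ᵥ q)) ⬝ᵥ (H21ᵀ *ᵥ q) ≤ (1 / 4 : ℝ) * ((H22 *ᵥ q) ⬝ᵥ q))
    (lam : ℝ) (v : Fin n → ℝ) (q : Fin m → ℝ)
    (hvq : ¬(v = 0 ∧ q = 0))
    (h1 : H11 *ᵥ v + H21ᵀ *ᵥ q = lam • (H11 *ᵥ v))
    (h2 : H21 *ᵥ v + H22 *ᵥ q = lam • (H22 *ᵥ q)) :
    (1 / 2 : ℝ) ≤ lam := by
  have e1 : H21ᵀ *ᵥ q = (lam - 1) • (H11 *ᵥ v) := by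
    rw [sub_smul, one_smul]
    linear_combination (norm := module) h1
  have e2 : H21 *ᵥ v = (lam - 1) • (H22 *ᵥ q) := by
    rw [sub_smul, one_smul]
    linear_combination (norm := module) h2
  rcases eq_or_ne lam 1 with hl | hl
  · rw [hl]; norm_num
  have hl' : lam - 1 ≠ 0 := sub_ne_zero.mpr hl
  -- q ≠ 0
  have hq : q ≠ 0 := by
    intro hq0
    apply hvq
    refine ⟨?_, hq0⟩
    have h01 : (lam - 1) • (H11 *ᵥ v) = 0 := by
      rw [← e1, hq0, mulVec_zero]
    have h0 : H11 *ᵥ v = 0 := (smul_eq_zero.mp h01).resolve_left hl'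
    by_contra hv
    have := hH11.dotProduct_mulVec_pos hv
    rw [h0] at this
    simp at this
  have hdet : IsUnit H11.det := isUnit_iff_ne_zero.mpr hH11.det_pos.ne'
  have e3 : H11⁻¹ *ᵥ (H21ᵀ *ᵥ q) = (lam - 1) • v := by
    rw [e1, mulVec_smul, mulVec_mulVec, nonsing_inv_mul _ hdet, one_mulVec]
  set a : ℝ := (H22 *ᵥ q) ⬝ᵥ q with ha_def
  have ha : 0 < a := by
    have := hH22.dotProduct_mulVec_pos hq
    simpa [ha_def, dotProduct_comm] using this
  have key : (lam - 1) ^ 2 * a ≤ (1 / 4 : ℝ) * a := by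
    have hb := hbound q
    have hdot : (H11⁻¹ *ᵥ (H21ᵀ *ᵥ q)) ⬝ᵥ (H21ᵀ *ᵥ q) = (lam - 1) ^ 2 * a := by
      rw [e3, smul_dotProduct]
      have hv : v ⬝ᵥ (H21ᵀ *ᵥ q) = (lam - 1) * a := by
        rw [dotProduct_mulVec, vecMul_transpose, e2, smul_dotProduct,
          smul_eq_mul]
      rw [hv, smul_eq_mul]; ring
    rw [hdot] at hb
    exact hb
  have hsq : (lam - 1) ^ 2 ≤ 1 / 4 := le_of_mul_le_mul_right key ha
  nlinarith [hsq, sq_nonneg (lam - 1 / 2)]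
end

section
/- Let A be an invertible n×n real matrix with symmetric part A_s = (A + Aᵀ)/2, B an m×n real matrix, C an m×m real symmetric positive semidefinite matrix, and S = B A⁻¹ Bᵀ + C. Then for every p ∈ ℝᵐ, ⟨A_s A⁻ᵀ Bᵀ p, A⁻ᵀ Bᵀ p⟩ = ⟨B A⁻¹ Bᵀ p, p⟩ ≤ ⟨S p, p⟩. -/
open Matrix

/-- With `A_s = (A + Aᵀ)/2`, `A⁻ᵀ = (Aᵀ)⁻¹`, `C` symmetric positive
semidefinite, and `S = B A⁻¹ Bᵀ + C`, for every `p` one has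
`⟨A_s A⁻ᵀ Bᵀ p, A⁻ᵀ Bᵀ p⟩ = ⟨B A⁻¹ Bᵀ p, p⟩ ≤ ⟨S p, p⟩`. -/
theorem stmt_12 (n m : ℕ)
    (A : Matrix (Fin n) (Fin n) ℝ) (B : Matrix (Fin m) (Fin n) ℝ)
    (C : Matrix (Fin m) (Fin m) ℝ)
    (hA : IsUnit A) (hC : C.PosSemidef) (p : Fin m → ℝ) :
    ((((1 / 2 : ℝ) • (A + Aᵀ)) *ᵥ ((Aᵀ)⁻¹ *ᵥ (Bᵀ *ᵥ p))) ⬝ᵥ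
        ((Aᵀ)⁻¹ *ᵥ (Bᵀ *ᵥ p)) = ((B * A⁻¹ * Bᵀ) *ᵥ p) ⬝ᵥ p) ∧
      ((B * A⁻¹ * Bᵀ) *ᵥ p) ⬝ᵥ p ≤ ((B * A⁻¹ * Bᵀ + C) *ᵥ p) ⬝ᵥ p := by
  have hdet : IsUnit A.det := (Matrix.isUnit_iff_isUnit_det A).mp hA
  have hdetT : IsUnit Aᵀ.det := by rwa [Matrix.det_transpose]
  set q := Bᵀ *ᵥ p with hq
  set y := (Aᵀ)⁻¹ *ᵥ q with hy
  have hATy : Aᵀ *ᵥ y = q := by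
    rw [hy, Matrix.mulVec_mulVec, Matrix.mul_nonsing_inv _ hdetT, Matrix.one_mulVec]
  have hAy : (A *ᵥ y) ⬝ᵥ y = q ⬝ᵥ y := by
    rw [dotProduct_comm, Matrix.dotProduct_mulVec, ← Matrix.mulVec_transpose, hATy,
      dotProduct_comm]
  have hqy : q ⬝ᵥ y = ((B * A⁻¹ * Bᵀ) *ᵥ p) ⬝ᵥ p := by
    rw [hy, hq, ← Matrix.transpose_nonsing_inv, Matrix.dotProduct_mulVec,
      ← Matrix.mulVec_transpose, Matrix.transpose_transpose,
      ← Matrix.mulVec_mulVec, ← Matrix.mulVec_mulVec,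
      dotProduct_comm (B *ᵥ _) p, Matrix.dotProduct_mulVec,
      ← Matrix.mulVec_transpose, dotProduct_comm, Matrix.transpose_transpose]
  constructor
  · rw [Matrix.smul_mulVec, Matrix.add_mulVec, smul_dotProduct, add_dotProduct,
      hAy, hATy]
    rw [← hqy, smul_eq_mul]; ring
  · rw [Matrix.add_mulVec, add_dotProduct]
    have h0 : 0 ≤ (C *ᵥ p) ⬝ᵥ p := by
      have := hC.dotProduct_mulVec_nonneg p
      simpa [dotProduct_comm] using this
    linarith
end

section
/- Let A be an invertible n×n real matrix whose symmetric part A_s = (A + Aᵀ)/2 is positive definite, B an m×n real matrix, C an m×m real symmetric positive semidefinite matrix, S = B A⁻¹ Bᵀ + C, and let Ŝ be an m×m real symmetric positive definite matrix. Assume there is α with 0 < α ≤ 1 such that α ⟨Ŝ p, p⟩ ≤ ⟨S p, p⟩ for all p ∈ ℝᵐ. Define K = [[A, Bᵀ],[B, −C]], P̂ = [[A, Bᵀ],[0, −Ŝ]], and M = diag(A_s, Ŝ). Then for every z ∈ ℝ^{n+m}, ⟨M⁻¹ K P̂⁻¹ z, z⟩ ≥ (α/2) ⟨M⁻¹ z,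 z⟩, i.e. the field-of-values quantity μ(K P̂⁻¹) = inf_{z≠0} ⟨M⁻¹ K P̂⁻¹ z, z⟩/⟨M⁻¹ z, z⟩ is at least α/2. -/
open Matrix

lemma adj_dot {ι κ : Type*} [Fintype ι] [Fintype κ] (M : Matrix ι κ ℝ) (v : κ → ℝ) (w : ι → ℝ) :
    (M *ᵥ v) ⬝ᵥ w = v ⬝ᵥ (Mᵀ *ᵥ w) := by
  rw [dotProduct_comm, dotProduct_mulVec, ← mulVec_transpose, dotProduct_comm]

lemma psd_nonneg {ι : Type*} [Fintype ι] {M : Matrix ι ι ℝ} (h : M.PosSemidef) (v : ι → ℝ) :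
    0 ≤ (M *ᵥ v) ⬝ᵥ v := by
  have h2 := h.dotProduct_mulVec_nonneg v
  simpa [dotProduct_comm] using h2

/-- Field-of-values lower bound for the preconditioned matrix
`K P̂⁻¹` in the inner product defined by `M⁻¹`, `M = diag(A_s, Ŝ)`:
if `α ⟨Ŝ p, p⟩ ≤ ⟨S p, p⟩` for all `p` with `0 < α ≤ 1`, then
`⟨M⁻¹ K P̂⁻¹ z, z⟩ ≥ (α/2) ⟨M⁻¹ z, z⟩` for all `z`. -/
theorem stmt_16 (n m : ℕ)
    (A : Matrix (Fin n) (Fin n) ℝ) (B : Matrix (Fin m) (Fin n) ℝ)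
    (C : Matrix (Fin m) (Fin m) ℝ) (Shat : Matrix (Fin m) (Fin m) ℝ)
    (hA : IsUnit A)
    (hAs : (((1 / 2 : ℝ) • (A + Aᵀ))).PosDef)
    (hC : C.PosSemidef) (hShat : Shat.PosDef)
    (α : ℝ) (hα0 : 0 < α) (hα1 : α ≤ 1)
    (hαS : ∀ p : Fin m → ℝ,
      α * ((Shat *ᵥ p) ⬝ᵥ p) ≤ ((B * A⁻¹ * Bᵀ + C) *ᵥ p) ⬝ᵥ p) :
    ∀ z : Fin n ⊕ Fin m → ℝ,
      α / 2 *
          (((Matrix.fromBlocks ((1 / 2 : ℝ) • (A + Aᵀ)) 0 0 Shat)⁻¹ *ᵥ z) ⬝ᵥ z) ≤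
        ((Matrix.fromBlocks ((1 / 2 : ℝ) • (A + Aᵀ)) 0 0 Shat)⁻¹ *ᵥ
            (((Matrix.fromBlocks A Bᵀ B (-C)) *
                (Matrix.fromBlocks A Bᵀ 0 (-Shat))⁻¹) *ᵥ z)) ⬝ᵥ z := by
  intro z
  set As : Matrix (Fin n) (Fin n) ℝ := ((1 / 2 : ℝ) • (A + Aᵀ)) with hAsdef
  have hAdet : IsUnit A.det := (Matrix.isUnit_iff_isUnit_det A).mp hA
  have hAsdet : IsUnit As.det := (Matrix.isUnit_iff_isUnit_det As).mp hAs.isUnit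
  have hShdet : IsUnit Shat.det := (Matrix.isUnit_iff_isUnit_det Shat).mp hShat.isUnit
  have hAsT : Asᵀ = As := by
    rw [hAsdef, transpose_smul, transpose_add, transpose_transpose, add_comm]
  have hShT : Shatᵀ = Shat := by
    have h := hShat.1
    rwa [Matrix.IsHermitian, conjTranspose_eq_transpose_of_trivial] at h
  have hShIT : Shat⁻¹ᵀ = Shat⁻¹ := by rw [transpose_nonsing_inv, hShT]
  -- inverse of M
  have hMinv : (fromBlocks As 0 0 Shat)⁻¹ =
      fromBlocks As⁻¹ 0 0 Shat⁻¹ := by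
    apply inv_eq_right_inv
    rw [fromBlocks_multiply]
    simp [Matrix.mul_nonsing_inv _ hAsdet, Matrix.mul_nonsing_inv _ hShdet,
      fromBlocks_one]
  -- inverse of P̂
  have hzero : A * (A⁻¹ * Bᵀ * Shat⁻¹) + Bᵀ * -Shat⁻¹ = 0 := by
    simp only [← Matrix.mul_assoc, Matrix.mul_nonsing_inv _ hAdet, Matrix.one_mul,
      Matrix.mul_neg]
    simp
  have hPinv : (fromBlocks A Bᵀ 0 (-Shat))⁻¹ =
      fromBlocks A⁻¹ (A⁻¹ * Bᵀ * Shat⁻¹) 0 (-Shat⁻¹) := by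
    apply inv_eq_right_inv
    rw [fromBlocks_multiply]
    rw [hzero]
    simp [Matrix.mul_nonsing_inv _ hAdet, Matrix.mul_nonsing_inv _ hShdet,
      fromBlocks_one]
  -- K * P̂⁻¹
  have hKP : (fromBlocks A Bᵀ B (-C)) * (fromBlocks A Bᵀ 0 (-Shat))⁻¹ =
      fromBlocks 1 0 (B * A⁻¹) ((B * A⁻¹ * Bᵀ + C) * Shat⁻¹) := by
    rw [hPinv, fromBlocks_multiply, hzero]
    simp only [Matrix.mul_zero, add_zero, Matrix.mul_nonsing_inv _ hAdet,
      neg_mul_neg, Matrix.add_mul, ← Matrix.mul_assoc]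
  set x : Fin n → ℝ := z ∘ Sum.inl with hx
  set y : Fin m → ℝ := z ∘ Sum.inr with hy
  set p : Fin m → ℝ := Shat⁻¹ *ᵥ y with hp
  set g : Fin n → ℝ := Bᵀ *ᵥ p with hg
  set w : Fin n → ℝ := A⁻¹ᵀ *ᵥ g with hw
  set u : Fin n → ℝ := As⁻¹ *ᵥ x with hu
  have hyp : y = Shat *ᵥ p := by
    rw [hp, mulVec_mulVec, Matrix.mul_nonsing_inv _ hShdet, one_mulVec]
  -- scalars
  set X : ℝ := (As⁻¹ *ᵥ x) ⬝ᵥ x with hX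
  set s : ℝ := (Shat *ᵥ p) ⬝ᵥ p with hs
  set D : ℝ := (A⁻¹ *ᵥ g) ⬝ᵥ g with hD
  set c : ℝ := (C *ᵥ p) ⬝ᵥ p with hc
  -- Schur quadratic form
  have hSd : ((B * A⁻¹ * Bᵀ + C) *ᵥ p) ⬝ᵥ p = D + c := by
    rw [add_mulVec, add_dotProduct, ← mulVec_mulVec p (B * A⁻¹) Bᵀ, ← hg,
      ← mulVec_mulVec g B A⁻¹, adj_dot B (A⁻¹ *ᵥ g) p, ← hg, ← hD, ← hc]
  -- left side
  have hL : ((fromBlocks As 0 0 Shat)⁻¹ *ᵥ z) ⬝ᵥ z = X + s := by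
    rw [hMinv, ← Sum.elim_comp_inl_inr z, fromBlocks_mulVec, sumElim_dotProduct_sumElim]
    simp only [Sum.elim_comp_inl, Sum.elim_comp_inr, zero_mulVec, add_zero, zero_add, ← hx, ← hy]
    rw [← hp, hyp, dotProduct_comm p, ← hs, ← hu, ← hX]
  -- right side
  have hR : ((fromBlocks As 0 0 Shat)⁻¹ *ᵥ
      (((fromBlocks A Bᵀ B (-C)) * (fromBlocks A Bᵀ 0 (-Shat))⁻¹) *ᵥ z)) ⬝ᵥ z =
      X + (x ⬝ᵥ w + (D + c)) := by
    rw [hKP, hMinv, ← Sum.elim_comp_inl_inr z, fromBlocks_mulVec, fromBlocks_mulVec,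
      sumElim_dotProduct_sumElim]
    simp only [Sum.elim_comp_inl, Sum.elim_comp_inr, zero_mulVec, add_zero, zero_add,
      one_mulVec, ← hx, ← hy, ← hX]
    congr 1
    rw [← mulVec_mulVec y (B * A⁻¹ * Bᵀ + C) Shat⁻¹, ← hp,
      adj_dot Shat⁻¹ ((B * A⁻¹) *ᵥ x + (B * A⁻¹ * Bᵀ + C) *ᵥ p) y, hShIT, ← hp,
      add_dotProduct, hSd, adj_dot (B * A⁻¹) x p, transpose_mul,
      ← mulVec_mulVec p A⁻¹ᵀ Bᵀ, ← hg, ← hw]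
  -- key quadratic identities
  have hAsmulu : As *ᵥ u = x := by
    rw [hu, mulVec_mulVec, Matrix.mul_nonsing_inv _ hAsdet, one_mulVec]
  have hATw : Aᵀ *ᵥ w = g := by
    rw [hw, mulVec_mulVec, ← transpose_mul, Matrix.nonsing_inv_mul _ hAdet, transpose_one,
      one_mulVec]
  have hATwD : (Aᵀ *ᵥ w) ⬝ᵥ w = D := by
    rw [hATw, hD, adj_dot A⁻¹ g g, ← hw]
  have hAwD : (A *ᵥ w) ⬝ᵥ w = D := by
    rw [adj_dot A w w, dotProduct_comm, hATwD]
  have hAsw : (As *ᵥ w) ⬝ᵥ w = D := by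
    rw [hAsdef, smul_mulVec, add_mulVec, smul_dotProduct, add_dotProduct,
      hAwD, hATwD, smul_eq_mul]
    ring
  -- nonnegativity
  have hXpos : 0 ≤ X := by rw [hX]; exact psd_nonneg hAs.inv.posSemidef x
  have hDpos : 0 ≤ D := by rw [← hAsw]; exact psd_nonneg hAs.posSemidef w
  have hcpos : 0 ≤ c := by rw [hc]; exact psd_nonneg hC p
  -- cross term lower bound
  have hcross : 0 ≤ X + 2 * (x ⬝ᵥ w) + D := by
    have h0 := psd_nonneg hAs.posSemidef (u + w)
    have hexp : (As *ᵥ (u + w)) ⬝ᵥ (u + w) = X + 2 * (x ⬝ᵥ w) + D := by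
      rw [mulVec_add, add_dotProduct, dotProduct_add, dotProduct_add, hAsmulu, hAsw]
      have h1 : x ⬝ᵥ u = X := by rw [hX, hu, dotProduct_comm]
      have h2 : (As *ᵥ w) ⬝ᵥ u = x ⬝ᵥ w := by
        rw [adj_dot As w u, hAsT, hAsmulu, dotProduct_comm]
      rw [h1, h2]
      ring
    rw [hexp] at h0
    linarith
  -- Schur complement bound
  have hSchur : α * s ≤ D + c := by
    have h := hαS p
    rwa [← hs, hSd] at h
  have haX : α * X ≤ X := mul_le_of_le_one_left hXpos hα1
  rw [hL, hR]
  nlinarith [hcross, hSchur, haX, hDpos, hcpos, hXpos]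
end

section
/- Let A be an invertible n×n real matrix whose symmetric part A_s = (A + Aᵀ)/2 is positive definite, B an m×n real matrix, C an m×m real symmetric positive semidefinite matrix, and suppose S = B A⁻¹ Bᵀ + C is invertible. Let Ŝ be an m×m real symmetric positive definite matrix such that ⟨Ŝ⁻¹ q, q⟩ ≤ ⟨S⁻¹ q, q⟩ for all q ∈ ℝᵐ. Define K = [[A, Bᵀ],[B, −C]] (which is invertible), P̂ = [[A, Bᵀ],[0, −Ŝ]], and M = diag(A_s, Ŝ). Then for every z ∈ ℝ^{n+m}, ⟨M⁻¹ P̂ K⁻¹ z, z⟩ ≥ (1/2) ⟨M⁻¹ z, z⟩, i.e. the field-of-values quantity μ(P̂ K⁻¹) = inf_{z≠0} ⟨M⁻¹ P̂ K⁻¹ z, z⟩/⟨M⁻¹ z, z⟩ is at least 1/2. -/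
open Matrix

lemma dot_swap {k l : ℕ} (M : Matrix (Fin k) (Fin l) ℝ) (v : Fin l → ℝ) (w : Fin k → ℝ) :
    (M *ᵥ v) ⬝ᵥ w = v ⬝ᵥ (Mᵀ *ᵥ w) := by
  rw [Matrix.dotProduct_mulVec, Matrix.vecMul_transpose]

lemma quad {k l : ℕ} (M : Matrix (Fin l) (Fin l) ℝ) (N : Matrix (Fin l) (Fin k) ℝ)
    (v : Fin k → ℝ) :
    (M *ᵥ (N *ᵥ v)) ⬝ᵥ (N *ᵥ v) = ((Nᵀ * M * N) *ᵥ v) ⬝ᵥ v := by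
  rw [dotProduct_comm, dot_swap, Matrix.mulVec_mulVec, Matrix.mulVec_mulVec,
    dotProduct_comm, Matrix.mul_assoc]

lemma aux_amgm {k : ℕ} (P : Matrix (Fin k) (Fin k) ℝ) (hP : P.PosDef)
    (u y : Fin k → ℝ) :
    u ⬝ᵥ y ≤ 1/2 * ((P⁻¹ *ᵥ u) ⬝ᵥ u) + 1/2 * ((P *ᵥ y) ⬝ᵥ y) := by
  have hdet : IsUnit P.det := (Matrix.isUnit_iff_isUnit_det P).mp hP.isUnit
  have hPi : P * P⁻¹ = 1 := Matrix.mul_nonsing_inv _ hdet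
  have hsym : Pᵀ = P := hP.isHermitian.eq
  have hsymi : P⁻¹ᵀ = P⁻¹ := by rw [Matrix.transpose_nonsing_inv, hsym]
  have h := hP.posSemidef.dotProduct_mulVec_nonneg (P⁻¹ *ᵥ u - y)
  have hw : P *ᵥ (P⁻¹ *ᵥ u - y) = u - P *ᵥ y := by
    rw [Matrix.mulVec_sub, Matrix.mulVec_mulVec, hPi, Matrix.one_mulVec]
  rw [hw, star_trivial] at h
  rw [sub_dotProduct, dotProduct_sub, dotProduct_sub] at h
  have e1 : (P⁻¹ *ᵥ u) ⬝ᵥ (P *ᵥ y) = u ⬝ᵥ y := by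
    rw [dot_swap, Matrix.mulVec_mulVec, hsymi, Matrix.nonsing_inv_mul _ hdet,
      Matrix.one_mulVec]
  have e2 : y ⬝ᵥ u = u ⬝ᵥ y := dotProduct_comm _ _
  have e3 : y ⬝ᵥ (P *ᵥ y) = (P *ᵥ y) ⬝ᵥ y := dotProduct_comm _ _
  nlinarith [h]

/-- Field-of-values lower bound for `P̂ K⁻¹` in the inner product
defined by `M⁻¹`, `M = diag(A_s, Ŝ)`: if `⟨Ŝ⁻¹ q, q⟩ ≤ ⟨S⁻¹ q, q⟩` for all `q`,
then `K` is invertible and `⟨M⁻¹ P̂ K⁻¹ z, z⟩ ≥ (1/2) ⟨M⁻¹ z, z⟩` for all `z`. -/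
theorem stmt_17 (n m : ℕ)
    (A : Matrix (Fin n) (Fin n) ℝ) (B : Matrix (Fin m) (Fin n) ℝ)
    (C : Matrix (Fin m) (Fin m) ℝ) (Shat : Matrix (Fin m) (Fin m) ℝ)
    (hA : IsUnit A)
    (hAs : (((1 / 2 : ℝ) • (A + Aᵀ))).PosDef)
    (hC : C.PosSemidef)
    (hS : IsUnit (B * A⁻¹ * Bᵀ + C))
    (hShat : Shat.PosDef)
    (hinv : ∀ q : Fin m → ℝ,
      (Shat⁻¹ *ᵥ q) ⬝ᵥ q ≤ ((B * A⁻¹ * Bᵀ + C)⁻¹ *ᵥ q) ⬝ᵥ q) :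
    IsUnit (Matrix.fromBlocks A Bᵀ B (-C)) ∧
      ∀ z : Fin n ⊕ Fin m → ℝ,
        (1 / 2 : ℝ) *
            (((Matrix.fromBlocks ((1 / 2 : ℝ) • (A + Aᵀ)) 0 0 Shat)⁻¹ *ᵥ z) ⬝ᵥ z) ≤
          ((Matrix.fromBlocks ((1 / 2 : ℝ) • (A + Aᵀ)) 0 0 Shat)⁻¹ *ᵥ
              (((Matrix.fromBlocks A Bᵀ 0 (-Shat)) *
                  (Matrix.fromBlocks A Bᵀ B (-C))⁻¹) *ᵥ z)) ⬝ᵥ z := by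
  set As := (1/2:ℝ) • (A + Aᵀ) with hAsdef
  set S := B * A⁻¹ * Bᵀ + C with hSdef
  have hAdet : IsUnit A.det := (Matrix.isUnit_iff_isUnit_det A).mp hA
  have hSdet : IsUnit S.det := (Matrix.isUnit_iff_isUnit_det S).mp hS
  have hAsdet : IsUnit As.det := (Matrix.isUnit_iff_isUnit_det As).mp hAs.isUnit
  have hShdet : IsUnit Shat.det := (Matrix.isUnit_iff_isUnit_det Shat).mp hShat.isUnit
  have hA1 : A * A⁻¹ = 1 := Matrix.mul_nonsing_inv _ hAdet
  have hA2 : A⁻¹ * A = 1 := Matrix.nonsing_inv_mul _ hAdet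
  have hS1 : S * S⁻¹ = 1 := Matrix.mul_nonsing_inv _ hSdet
  have hS2 : S⁻¹ * S = 1 := Matrix.nonsing_inv_mul _ hSdet
  have hAs1 : As * As⁻¹ = 1 := Matrix.mul_nonsing_inv _ hAsdet
  have hAs2 : As⁻¹ * As = 1 := Matrix.nonsing_inv_mul _ hAsdet
  have hSh1 : Shat * Shat⁻¹ = 1 := Matrix.mul_nonsing_inv _ hShdet
  have hSh2 : Shat⁻¹ * Shat = 1 := Matrix.nonsing_inv_mul _ hShdet
  -- K invertible
  have hKfact : Matrix.fromBlocks A Bᵀ B (-C) =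
      (Matrix.fromBlocks 1 0 (B * A⁻¹) 1) * (Matrix.fromBlocks A Bᵀ 0 (-S)) := by
    have e21 : B * A⁻¹ * A = B := by rw [Matrix.mul_assoc, hA2, Matrix.mul_one]
    have e22 : B * A⁻¹ * Bᵀ + -S = -C := by rw [hSdef]; abel
    rw [Matrix.fromBlocks_multiply]
    simp only [Matrix.one_mul, Matrix.zero_mul, Matrix.mul_zero, Matrix.mul_one,
      add_zero, zero_add, e21, e22]
  have hKU : IsUnit (Matrix.fromBlocks A Bᵀ B (-C)) := by
    rw [hKfact]
    exact (Matrix.isUnit_fromBlocks_zero₁₂.mpr ⟨isUnit_one, isUnit_one⟩).mul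
      (Matrix.isUnit_fromBlocks_zero₂₁.mpr ⟨hA, hS.neg⟩)
  refine ⟨hKU, fun z => ?_⟩
  -- M⁻¹
  have hMinv : (Matrix.fromBlocks As 0 0 Shat)⁻¹ = Matrix.fromBlocks As⁻¹ 0 0 Shat⁻¹ := by
    apply Matrix.inv_eq_right_inv
    rw [Matrix.fromBlocks_multiply]
    simp [hAs1, hSh1]
  -- P̂ K⁻¹
  have hKdet : IsUnit (Matrix.fromBlocks A Bᵀ B (-C)).det :=
    (Matrix.isUnit_iff_isUnit_det _).mp hKU
  have hTK : (Matrix.fromBlocks 1 0 (-(Shat * S⁻¹ * B * A⁻¹)) (Shat * S⁻¹)) *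
      (Matrix.fromBlocks A Bᵀ B (-C)) = Matrix.fromBlocks A Bᵀ 0 (-Shat) := by
    have e21 : -(Shat * S⁻¹ * B * A⁻¹) * A + Shat * S⁻¹ * B = 0 := by
      rw [Matrix.neg_mul, Matrix.mul_assoc _ A⁻¹ A, hA2, Matrix.mul_one]
      exact neg_add_cancel _
    have e22 : -(Shat * S⁻¹ * B * A⁻¹) * Bᵀ + Shat * S⁻¹ * (-C) = -Shat := by
      have key : Shat * S⁻¹ * B * A⁻¹ * Bᵀ + Shat * S⁻¹ * C = Shat := by
        calc Shat * S⁻¹ * B * A⁻¹ * Bᵀ + Shat * S⁻¹ * C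
            = Shat * S⁻¹ * (B * A⁻¹ * Bᵀ + C) := by
              simp only [Matrix.mul_add, Matrix.mul_assoc]
          _ = Shat * (S⁻¹ * S) := by rw [← hSdef, Matrix.mul_assoc]
          _ = Shat := by rw [hS2, Matrix.mul_one]
      rw [Matrix.neg_mul, Matrix.mul_neg, ← neg_add, key]
    rw [Matrix.fromBlocks_multiply]
    simp only [Matrix.one_mul, Matrix.zero_mul, Matrix.mul_zero, Matrix.mul_one,
      add_zero, zero_add, e21, e22]
  have hT : (Matrix.fromBlocks A Bᵀ 0 (-Shat)) * (Matrix.fromBlocks A Bᵀ B (-C))⁻¹ =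
      Matrix.fromBlocks 1 0 (-(Shat * S⁻¹ * B * A⁻¹)) (Shat * S⁻¹) := by
    rw [← hTK, Matrix.mul_assoc, Matrix.mul_nonsing_inv _ hKdet, Matrix.mul_one]
  rw [hMinv, hT]
  -- decompose z
  obtain ⟨a, b, rfl⟩ : ∃ a b, z = Sum.elim a b :=
    ⟨z ∘ Sum.inl, z ∘ Sum.inr, (Sum.elim_comp_inl_inr z).symm⟩
  have hXa : Shat⁻¹ * -(Shat * S⁻¹ * B * A⁻¹) = -(S⁻¹ * B * A⁻¹) := by
    rw [Matrix.mul_neg]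
    simp only [← Matrix.mul_assoc]
    rw [hSh2, Matrix.one_mul]
  have hXa' : Shat⁻¹ * (Shat * S⁻¹ * B * A⁻¹) = S⁻¹ * B * A⁻¹ := by
    simp only [← Matrix.mul_assoc]
    rw [hSh2, Matrix.one_mul]
  have hYb : Shat⁻¹ * (Shat * S⁻¹) = S⁻¹ := by
    rw [← Matrix.mul_assoc, hSh2, Matrix.one_mul]
  simp only [Matrix.fromBlocks_mulVec, Matrix.zero_mulVec, Matrix.one_mulVec,
    Matrix.mulVec_add, Matrix.mulVec_mulVec, add_zero, zero_add,
    sumElim_dotProduct_sumElim, Sum.elim_comp_inl, Sum.elim_comp_inr, hXa, hYb,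
    Matrix.zero_mul, add_dotProduct, Matrix.neg_mulVec, neg_dotProduct,
    Matrix.mulVec_neg, hXa', zero_dotProduct, neg_zero, add_zero]
  -- scalar core
  obtain ⟨c, hc⟩ : ∃ c, c = (S⁻¹)ᵀ *ᵥ b := ⟨_, rfl⟩
  obtain ⟨x, hx⟩ : ∃ x, x = A⁻¹ *ᵥ a := ⟨_, rfl⟩
  obtain ⟨y, hy⟩ : ∃ y, y = A⁻¹ *ᵥ (Bᵀ *ᵥ c) := ⟨_, rfl⟩
  have hax : A *ᵥ x = a := by rw [hx, Matrix.mulVec_mulVec, hA1, Matrix.one_mulVec]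
  have hby : A *ᵥ y = Bᵀ *ᵥ c := by rw [hy, Matrix.mulVec_mulVec, hA1, Matrix.one_mulVec]
  -- cross term identity
  have cross : ((S⁻¹ * B * A⁻¹) *ᵥ a) ⬝ᵥ b = (Aᵀ *ᵥ x) ⬝ᵥ y := by
    have h1 : (S⁻¹ * B * A⁻¹) *ᵥ a = S⁻¹ *ᵥ (B *ᵥ x) := by
      rw [hx, Matrix.mulVec_mulVec, Matrix.mulVec_mulVec]
    rw [h1, dot_swap S⁻¹ (B *ᵥ x) b, ← hc, dot_swap B x c, ← hby,
      dot_swap Aᵀ x y, Matrix.transpose_transpose]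
  -- symmetric-part matrix identity
  have hAe : Aᵀ = (2:ℝ) • As - A := by rw [hAsdef]; module
  have hmid : A * As⁻¹ * Aᵀ = Aᵀ * As⁻¹ * A := by
    have h1 : A * As⁻¹ * Aᵀ = (2:ℝ) • A - A * As⁻¹ * A := by
      rw [hAe, Matrix.mul_sub, mul_smul_comm, Matrix.mul_assoc A As⁻¹ As, hAs2,
        Matrix.mul_one]
    have h2 : Aᵀ * As⁻¹ * A = (2:ℝ) • A - A * As⁻¹ * A := by
      rw [hAe, Matrix.sub_mul, Matrix.sub_mul, smul_mul_assoc, smul_mul_assoc, hAs1,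
        Matrix.one_mul]
    rw [h1, h2]
  have lhs1 : (As⁻¹ *ᵥ (Aᵀ *ᵥ x)) ⬝ᵥ (Aᵀ *ᵥ x) = (As⁻¹ *ᵥ a) ⬝ᵥ a := by
    have q1 := quad As⁻¹ Aᵀ x
    have q2 := quad As⁻¹ A x
    rw [Matrix.transpose_transpose] at q1
    rw [q1, hmid, ← q2, hax]
  -- (S⁻¹ b, b) = (A y, y) + (c, C c)
  have hSc : Sᵀ *ᵥ c = b := by
    rw [hc, Matrix.mulVec_mulVec, ← Matrix.transpose_mul, hS2, Matrix.transpose_one,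
      Matrix.one_mulVec]
  have hSbb : (S⁻¹ *ᵥ b) ⬝ᵥ b = (A *ᵥ y) ⬝ᵥ y + c ⬝ᵥ (C *ᵥ c) := by
    have e1 : (S⁻¹ *ᵥ b) ⬝ᵥ b = b ⬝ᵥ c := by rw [dot_swap S⁻¹ b b, ← hc]
    have e2 : b ⬝ᵥ c = c ⬝ᵥ (S *ᵥ c) := by
      rw [← hSc, dot_swap Sᵀ c c, Matrix.transpose_transpose]
    have e3 : S *ᵥ c = B *ᵥ y + C *ᵥ c := by
      rw [hSdef, Matrix.add_mulVec, hy, Matrix.mulVec_mulVec, Matrix.mulVec_mulVec,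
        Matrix.mul_assoc]
    have e4 : c ⬝ᵥ (B *ᵥ y) = (A *ᵥ y) ⬝ᵥ y := by
      rw [dotProduct_comm, dot_swap B y c, ← hby, dotProduct_comm]
    rw [e1, e2, e3, dotProduct_add, e4]
  have hcC : 0 ≤ c ⬝ᵥ (C *ᵥ c) := by simpa using hC.dotProduct_mulVec_nonneg c
  have hAyy : (A *ᵥ y) ⬝ᵥ y = (As *ᵥ y) ⬝ᵥ y := by
    have hAty : (Aᵀ *ᵥ y) ⬝ᵥ y = (A *ᵥ y) ⬝ᵥ y := by
      rw [dot_swap Aᵀ y y, Matrix.transpose_transpose, dotProduct_comm]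
    rw [hAsdef, Matrix.smul_mulVec, Matrix.add_mulVec, smul_dotProduct,
      add_dotProduct, hAty, smul_eq_mul]
    ring
  have amgm := aux_amgm As hAs (Aᵀ *ᵥ x) y
  rw [lhs1] at amgm
  have core : ((S⁻¹ * B * A⁻¹) *ᵥ a) ⬝ᵥ b ≤
      1/2 * ((As⁻¹ *ᵥ a) ⬝ᵥ a) + 1/2 * ((S⁻¹ *ᵥ b) ⬝ᵥ b) := by
    rw [cross, hSbb]
    rw [← hAyy] at amgm
    linarith [amgm, hcC]
  have hb := hinv b
  linarith [core, hb]
end
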